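/- If the greedy queue bounds q_i = max { r : Q(r) ≤ S_i } (with S_i = Σ_{j≤i} B_j) satisfy additionally that the maximal single-rank probability δ_+ = max_r p(r) obeys δ_+ ≤ B_i for all i, then for every queue i the assigned mass m_i = Q(q_i) − Q(q_{i−1}) satisfies m_i ≤ B_i + δ_+, i.e., each queue overflows by at most one rank's worth of mass. -/

import Mathlib

/-!
If `g` is maximal with `Q g ≤ S` and there is still a rank `g` left, then adding that rank
overshoots `S`, so `Q g > S - p g ≥ S - δ`. Together with `Q (g i) ≤ S_{i-1} + B (i-1)`
this bounds the mass of queue `i`; if `g (i-1)` already exhausts all ranks, that mass is `≤ 0`.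
-/

open Finset

theorem sub_lt_sum_range_of_maximal {p : ℕ → ℝ} {S : ℝ} {g R : ℕ} (hgR : g ≤ R)
    (hmax : ∀ r ≤ R + 1, ∑ j ∈ range r, p j ≤ S → r ≤ g) :
    S - p g < ∑ j ∈ range g, p j := by
  have hovershoot : S < ∑ j ∈ range (g + 1), p j := by
    by_contra! h
    have := hmax (g + 1) (by omega) h
    omega
  rw [sum_range_succ] at hovershoot
  linarith

/-- Encoding: `S_i = ∑_{j<i} B j` (queues 0-indexed), `g i = q_i + 1` with `g 0 = 0`,
so that `Q(q_i) = ∑_{j < g i} p j`. -/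
theorem stmt_8_general (R n : ℕ) (p : ℕ → ℝ)
    (hp : ∀ r, 0 ≤ p r)
    (δ : ℝ) (hδub : ∀ r ≤ R, p r ≤ δ)
    (B : ℕ → ℝ) (hB : ∀ j, 0 ≤ B j)
    (g : ℕ → ℕ) (hg0 : g 0 = 0)
    (hgR : ∀ i, 1 ≤ i → i ≤ n → g i ≤ R + 1)
    (hgle : ∀ i, 1 ≤ i → i ≤ n →
      (∑ j ∈ Finset.range (g i), p j) ≤ ∑ j ∈ Finset.range i, B j)
    (hgmax : ∀ i, 1 ≤ i → i ≤ n → ∀ r ≤ R + 1,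
      (∑ j ∈ Finset.range r, p j) ≤ (∑ j ∈ Finset.range i, B j) → r ≤ g i) :
    ∀ i, 1 ≤ i → i ≤ n →
      ((∑ j ∈ Finset.range (g i), p j) - ∑ j ∈ Finset.range (g (i - 1)), p j) ≤
        B (i - 1) + δ := by
  rintro i hi hin
  obtain ⟨k, rfl⟩ : ∃ k, i = k + 1 := ⟨i - 1, by omega⟩
  rw [Nat.add_sub_cancel]
  have hδ : 0 ≤ δ := (hp 0).trans (hδub 0 R.zero_le)
  have hupper := hgle (k + 1) hi hin
  rw [sum_range_succ] at hupper
  rcases k.eq_zero_or_pos with rfl | hk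
  · simp only [hg0, range_zero, sum_empty] at hupper ⊢
    linarith
  rcases le_or_gt (g k) R with hgk | hgk
  · have hlower := sub_lt_sum_range_of_maximal hgk (hgmax k hk (by omega))
    linarith [hδub (g k) hgk]
  · have hmono : ∑ j ∈ range (g (k + 1)), p j ≤ ∑ j ∈ range (g k), p j :=
      sum_mono_set_of_nonneg hp (range_mono (by have := hgR (k + 1) hi hin; omega))
    linarith [hB k]

/-- With greedy bounds `q_i = max { r : Q r ≤ S_i }`
(`S_i = ∑_{j<i} B j` in 0-indexed form, `g i = q_i + 1`, `g 0 = 0`,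
`Q(q_i) = ∑_{j < g i} p j`), if the maximal single-rank probability
`δ₊ = max_r p r` obeys `δ₊ ≤ B_i` for all queues `i`, then every queue's
assigned mass satisfies `m_i = Q(q_i) − Q(q_{i−1}) ≤ B_i + δ₊`:
each queue overflows by at most one rank's worth of mass. -/
theorem stmt_8 (R n : ℕ) (p : ℕ → ℝ)
    (hp : ∀ r, 0 ≤ p r)
    (hsum : ∑ i ∈ Finset.range (R + 1), p i = 1)
    (δ : ℝ) (hδub : ∀ r ≤ R, p r ≤ δ) (hδmem : ∃ r ≤ R, p r = δ)
    (B : ℕ → ℝ) (hB : ∀ j, 0 ≤ B j) (hδB : ∀ j < n, δ ≤ B j)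
    (g : ℕ → ℕ) (hg0 : g 0 = 0)
    (hgR : ∀ i, 1 ≤ i → i ≤ n → g i ≤ R + 1)
    (hgle : ∀ i, 1 ≤ i → i ≤ n →
      (∑ j ∈ Finset.range (g i), p j) ≤ ∑ j ∈ Finset.range i, B j)
    (hgmax : ∀ i, 1 ≤ i → i ≤ n → ∀ r ≤ R + 1,
      (∑ j ∈ Finset.range r, p j) ≤ (∑ j ∈ Finset.range i, B j) → r ≤ g i) :
    ∀ i, 1 ≤ i → i ≤ n →
      ((∑ j ∈ Finset.range (g i), p j) - ∑ j ∈ Finset.range (g (i - 1)), p j) ≤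
        B (i - 1) + δ :=
  stmt_8_general R n p hp δ hδub B hB g hg0 hgR hgle hgmax
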